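/- arXiv:1106.2647 — 5 statements merged into one kernel-verified Lean document; each statement's English description precedes it below -/
import Mathlib

section
/- For every signature S, exactly the same formulas of Lprop(S) are valid with respect to the class Trec(S) of recursive causal models and with respect to the class Mrec(Φ_S) of recursive counterfactual structures: a formula φ ∈ Lprop(S) is valid in Trec(S) if and only if it is valid in Mrec(Φ_S). -/
/-! ## Signatures -/

structure Signature where
  exo : Type
  endo : Type
  exoFin : Fintype exo
  endoFin : Fintype endo
  endoDec : DecidableEq endo
  exoRange : exo → Type
  range : endo → Type
  exoRangeFin : ∀ u, Fintype (exoRange u)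
  rangeFin : ∀ X, Fintype (range X)
  exoRangeNe : ∀ u, Nonempty (exoRange u)
  rangeNe : ∀ X, Nonempty (range X)

attribute [instance] Signature.exoFin Signature.endoFin Signature.endoDec
  Signature.exoRangeFin Signature.rangeFin Signature.exoRangeNe Signature.rangeNe

/-- A context: an assignment of values to the exogenous variables. -/
abbrev Signature.Ctx (S : Signature) : Type := ∀ u : S.exo, S.exoRange u

/-- An assignment of values to the endogenous variables. -/
abbrev Signature.Asgn (S : Signature) : Type := ∀ X : S.endo, S.range X

/-- An intervention `Y⃗ ← y⃗`: a partial assignment of values to (distinct)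
endogenous variables. -/
abbrev Signature.Intervention (S : Signature) : Type := ∀ X : S.endo, Option (S.range X)

/-- The primitive propositions Φ_S : propositions `X = x` for `X ∈ V`, `x ∈ R(X)`. -/
abbrev Signature.Atom (S : Signature) : Type := Σ X : S.endo, S.range X

/-! ## Counterfactual structures -/

/-- A counterfactual structure over the primitive propositions `Φ`:
a finite set of worlds, a valuation, and a ternary relation `R`,
where `R w u v` means `u ⪯_w v`. -/
structure CStruct (Φ : Type) where
  World : Type
  worldFin : Fintype World
  val : World → Φ → Prop
  R : World → World → World → Prop
  self_mem : ∀ w, ∃ v, R w w v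
  refl_on : ∀ w u, (∃ v, R w u v) → R w u u
  trans_on : ∀ w u v x, (∃ y, R w u y) → (∃ y, R w v y) → (∃ y, R w x y) →
    R w u v → R w v x → R w u x
  centered : ∀ w u, u ≠ w → (R w w u ∧ ¬ R w u w)

attribute [instance] CStruct.worldFin

namespace CStruct

variable {Φ : Type} (M : CStruct Φ)

/-- `u ∈ W_w` : `u ⪯_w v` for some `v`. -/
def inW (w u : M.World) : Prop := ∃ v, M.R w u v

/-- `u ≺_w v` : `u ⪯_w v` and not `v ⪯_w u`. -/
def lt (w u v : M.World) : Prop := M.R w u v ∧ ¬ M.R w v u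

/-- The set of worlds in `W_w` satisfying `A` that are closest to `w`. -/
def closest (w : M.World) (A : M.World → Prop) : Set M.World :=
  {v | M.inW w v ∧ A v ∧ ∀ v', A v' → ¬ M.lt w v' v}

/-- `(M,w) ⊨ A > B` : every closest world to `w` satisfying `A` satisfies `B`. -/
def cfSat (w : M.World) (A B : M.World → Prop) : Prop :=
  ∀ v ∈ M.closest w A, B v

/-- Membership in `M⁺`: each `≺_w` is a strict total order on `W_w`. -/
def totalOrd : Prop :=
  ∀ w u v, M.inW w u → M.inW w v → u ≠ v → M.lt w u v ∨ M.lt w v u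

end CStruct

/-! ## Acceptable and full structures over Φ_S -/

/-- At every world, for each variable `X` exactly one proposition `X = x` is true. -/
def Acceptable (S : Signature) (M : CStruct S.Atom) : Prop :=
  ∀ (w : M.World) (X : S.endo), ∃! x : S.range X, M.val w ⟨X, x⟩

/-- Every assignment of values to the endogenous variables is realized at some
world of `W_w`, for every world `w`. -/
def Full (S : Signature) (M : CStruct S.Atom) : Prop :=
  ∀ (w : M.World) (a : S.Asgn), ∃ v, M.inW w v ∧ ∀ X : S.endo, M.val v ⟨X, a X⟩

/-- The antecedent `Y⃗ = y⃗` (a conjunction of atoms) of the counterfactual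
corresponding to the intervention `g`, as a predicate on worlds. -/
def intAnte (S : Signature) (M : CStruct S.Atom) (g : S.Intervention) :
    M.World → Prop :=
  fun v => ∀ (Y : S.endo) (y : S.range Y), g Y = some y → M.val v ⟨Y, y⟩

/-- `(M,w) ⊨ [Y⃗ ← y⃗](X = x)`, read as the counterfactual
`(Y₁ = y₁ ∧ ... ∧ Y_k = y_k) > (X = x)`. -/
def satBasic (S : Signature) (M : CStruct S.Atom) (w : M.World)
    (g : S.Intervention) (X : S.endo) (x : S.range X) : Prop :=
  M.cfSat w (intAnte S M g) (fun v => M.val v ⟨X, x⟩)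

/-- Recursive counterfactual structures `Mrec(Φ_S)`: full acceptable structures in
`M⁺` such that for each world there is a strict total order `≺` on the endogenous
variables such that if `W' ≺ Y` then setting `Y` (in addition to `X⃗`) does not
change the value of `W'` at the closest world. -/
def MRec (S : Signature) (M : CStruct S.Atom) : Prop :=
  Acceptable S M ∧ Full S M ∧ M.totalOrd ∧
  ∀ w : M.World, ∃ vlt : S.endo → S.endo → Prop, IsStrictTotalOrder S.endo vlt ∧
    ∀ W' Y : S.endo, vlt W' Y →
      ∀ g : S.Intervention, g W' = none → g Y = none →
        ∀ (y : S.range Y) (w' : S.range W'),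
          (satBasic S M w (Function.update g Y (some y)) W' w' ↔ satBasic S M w g W' w')

/-! ## Causal models -/

/-- A causal model over `S`: for each endogenous variable `X`, a structural
equation `F_X` mapping the values of all the other variables to a value of `X`. -/
structure CausalModel (S : Signature) where
  F : ∀ X : S.endo, S.Ctx → (∀ Y : {Y : S.endo // Y ≠ X}, S.range Y.1) → S.range X

namespace CausalModel

variable {S : Signature}

/-- `a` is a solution of the equations of `T_{g}` in context `u`. -/
def isSolution (T : CausalModel S) (g : S.Intervention) (u : S.Ctx) (a : S.Asgn) : Prop :=
  ∀ X : S.endo,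
    (∀ x : S.range X, g X = some x → a X = x) ∧
    (g X = none → a X = T.F X u (fun Y => a Y.1))

/-- `T` is recursive (acyclic): membership in `Trec(S)`. -/
def Recursive (T : CausalModel S) : Prop :=
  ∃ vlt : S.endo → S.endo → Prop, IsStrictTotalOrder S.endo vlt ∧
    ∀ X Y : S.endo, vlt X Y →
      ∀ (u : S.Ctx) (a a' : ∀ Z : {Z : S.endo // Z ≠ X}, S.range Z.1),
        (∀ Z : {Z : S.endo // Z ≠ X}, Z.1 ≠ Y → a Z = a' Z) →
        T.F X u a = T.F X u a'

/-- Membership in `Tun(S)`: all the equations of every `T_{X⃗ ← x⃗}` have a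
unique solution in every context. -/
def UniqueSolutions (T : CausalModel S) : Prop :=
  ∀ (g : S.Intervention) (u : S.Ctx), ∃! a : S.Asgn, T.isSolution g u a

end CausalModel

/-! ## The language Lprop(S) -/

/-- `Lprop(S)`: Boolean combinations of basic formulas `[Y⃗ ← y⃗](X = x)`. -/
inductive LProp (S : Signature) : Type
  | basic (g : S.Intervention) (X : S.endo) (x : S.range X) : LProp S
  | neg : LProp S → LProp S
  | and : LProp S → LProp S → LProp S

/-- Satisfaction of `Lprop(S)` formulas in a causal model, relative to a context. -/
def CausalModel.sat {S : Signature} (T : CausalModel S) (u : S.Ctx) : LProp S → Prop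
  | .basic g X x => ∀ a : S.Asgn, T.isSolution g u a → a X = x
  | .neg φ => ¬ CausalModel.sat T u φ
  | .and φ ψ => CausalModel.sat T u φ ∧ CausalModel.sat T u ψ

/-- Satisfaction of `Lprop(S)` formulas in a counterfactual structure over `Φ_S`. -/
def satL {S : Signature} (M : CStruct S.Atom) (w : M.World) : LProp S → Prop
  | .basic g X x => satBasic S M w g X x
  | .neg φ => ¬ satL M w φ
  | .and φ ψ => satL M w φ ∧ satL M w ψ

namespace LProp

variable {S : Signature}

def imp (φ ψ : LProp S) : LProp S := .neg (.and φ (.neg ψ))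

def or (φ ψ : LProp S) : LProp S := .neg (.and (.neg φ) (.neg ψ))

/-- Boolean evaluation of a formula treating the basic formulas as atoms. -/
def evalB (v : LProp S → Prop) : LProp S → Prop
  | .neg φ => ¬ evalB v φ
  | .and φ ψ => evalB v φ ∧ evalB v ψ
  | .basic g X x => v (.basic g X x)

/-- Instances of propositional tautologies in `Lprop(S)`. -/
def Taut (φ : LProp S) : Prop := ∀ v : LProp S → Prop, evalB v φ

/-- Disjunction of a nonempty list of formulas. -/
def bigOrNe : LProp S → List (LProp S) → LProp S
  | φ, [] => φ
  | φ, ψ :: l => or φ (bigOrNe ψ l)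

end LProp

/-- The proof system AXun(S): C0 (propositional tautologies), C1 (equality),
C2 (definiteness), C3 (composition), C4 (effectiveness), C5 (reversibility),
with modus ponens. -/
inductive AXunProv (S : Signature) : LProp S → Prop
  | taut {φ : LProp S} : LProp.Taut φ → AXunProv S φ
  | c1 (g : S.Intervention) (X : S.endo) (x x' : S.range X) (h : x ≠ x') :
      AXunProv S (LProp.imp (.basic g X x) (.neg (.basic g X x')))
  | c2 (g : S.Intervention) (X : S.endo) (x0 : S.range X) (l : List (S.range X))
      (h : x0 :: l = (Finset.univ : Finset (S.range X)).toList) :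
      AXunProv S (LProp.bigOrNe (.basic g X x0) (l.map (fun x => LProp.basic g X x)))
  | c3 (g : S.Intervention) (W : S.endo) (w : S.range W) (Y : S.endo) (y : S.range Y)
      (hW : g W = none) :
      AXunProv S (LProp.imp (.and (.basic g W w) (.basic g Y y))
        (.basic (Function.update g W (some w)) Y y))
  | c4 (g : S.Intervention) (X : S.endo) (x : S.range X) (h : g X = some x) :
      AXunProv S (.basic g X x)
  | c5 (g : S.Intervention) (W : S.endo) (w : S.range W) (Y : S.endo) (y : S.range Y)
      (hne : Y ≠ W) (hW : g W = none) (hY : g Y = none) :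
      AXunProv S (LProp.imp
        (.and (.basic (Function.update g W (some w)) Y y)
              (.basic (Function.update g Y (some y)) W w))
        (.basic g Y y))
  | mp {φ ψ : LProp S} : AXunProv S (LProp.imp φ ψ) → AXunProv S φ → AXunProv S ψ

/-! ## The language Lex(S) -/

/-- Boolean combinations of atoms `X = x`. -/
inductive BForm (S : Signature) : Type
  | atom (X : S.endo) (x : S.range X) : BForm S
  | neg : BForm S → BForm S
  | and : BForm S → BForm S → BForm S

def BForm.holds {S : Signature} (a : S.Asgn) : BForm S → Prop
  | .atom X x => a X = x
  | .neg φ => ¬ BForm.holds a φ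
  | .and φ ψ => BForm.holds a φ ∧ BForm.holds a ψ

/-- `Lex(S)`: Boolean combinations of basic formulas `[Y⃗ ← y⃗]ψ`, where `ψ` is a
Boolean combination of atoms. -/
inductive LEx (S : Signature) : Type
  | basic (g : S.Intervention) (ψ : BForm S) : LEx S
  | neg : LEx S → LEx S
  | and : LEx S → LEx S → LEx S

/-- Satisfaction of `Lex(S)` formulas in a causal model, relative to a context. -/
def CausalModel.satEx {S : Signature} (T : CausalModel S) (u : S.Ctx) : LEx S → Prop
  | .basic g ψ => ∀ a : S.Asgn, T.isSolution g u a → ψ.holds a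
  | .neg φ => ¬ CausalModel.satEx T u φ
  | .and φ ψ => CausalModel.satEx T u φ ∧ CausalModel.satEx T u ψ

/-! ## The counterfactual language L^C(Φ) and the system AX -/

/-- The language `L^C(Φ)`: primitive propositions closed under `∧`, `¬` and the
counterfactual connective `>` (`cf`). -/
inductive CForm (Φ : Type) : Type
  | atom : Φ → CForm Φ
  | fls : CForm Φ
  | neg : CForm Φ → CForm Φ
  | and : CForm Φ → CForm Φ → CForm Φ
  | cf : CForm Φ → CForm Φ → CForm Φ

namespace CForm

variable {Φ : Type}

def tr : CForm Φ := neg fls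

def or (φ ψ : CForm Φ) : CForm Φ := neg (and (neg φ) (neg ψ))

def imp (φ ψ : CForm Φ) : CForm Φ := or (neg φ) ψ

def iff (φ ψ : CForm Φ) : CForm Φ := and (imp φ ψ) (imp ψ φ)

/-- Boolean evaluation treating atoms and counterfactuals as atomic. -/
def evalB (v : CForm Φ → Prop) : CForm Φ → Prop
  | fls => False
  | neg φ => ¬ evalB v φ
  | and φ ψ => evalB v φ ∧ evalB v ψ
  | atom p => v (atom p)
  | cf φ ψ => v (cf φ ψ)

/-- Instances of propositional tautologies in `L^C(Φ)`. -/
def Taut (φ : CForm Φ) : Prop := ∀ v : CForm Φ → Prop, evalB v φ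

def bigAnd : List (CForm Φ) → CForm Φ
  | [] => tr
  | [φ] => φ
  | φ :: l => and φ (bigAnd l)

def bigOr : List (CForm Φ) → CForm Φ
  | [] => fls
  | [φ] => φ
  | φ :: l => or φ (bigOr l)

end CForm

/-- Provability in the system AX (axioms A0–A6, rules MP, RA1, RA2), augmented
with an arbitrary set `extra` of additional axioms. -/
inductive AXProv (Φ : Type) (extra : CForm Φ → Prop) : CForm Φ → Prop
  | taut {φ} : CForm.Taut φ → AXProv Φ extra φ
  | ax {φ} : extra φ → AXProv Φ extra φ
  | a1 (φ) : AXProv Φ extra (CForm.cf φ φ)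
  | a2 (φ ψ1 ψ2) : AXProv Φ extra
      (CForm.imp (CForm.and (CForm.cf φ ψ1) (CForm.cf φ ψ2)) (CForm.cf φ (CForm.and ψ1 ψ2)))
  | a3 (φ1 φ2 ψ) : AXProv Φ extra
      (CForm.imp (CForm.and (CForm.cf φ1 φ2) (CForm.cf φ1 ψ)) (CForm.cf (CForm.and φ1 φ2) ψ))
  | a4 (φ1 φ2 ψ) : AXProv Φ extra
      (CForm.imp (CForm.and (CForm.cf φ1 ψ) (CForm.cf φ2 ψ)) (CForm.cf (CForm.or φ1 φ2) ψ))
  | a5 : AXProv Φ extra (CForm.neg (CForm.cf CForm.tr CForm.fls))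
  | a6 (φ ψ) : AXProv Φ extra (CForm.imp φ (CForm.iff ψ (CForm.cf φ ψ)))
  | mp {φ ψ} : AXProv Φ extra (CForm.imp φ ψ) → AXProv Φ extra φ → AXProv Φ extra ψ
  | ra1 {φ φ' ψ} : AXProv Φ extra (CForm.iff φ φ') →
      AXProv Φ extra (CForm.imp (CForm.cf φ ψ) (CForm.cf φ' ψ))
  | ra2 {ψ ψ' φ} : AXProv Φ extra (CForm.imp ψ ψ') →
      AXProv Φ extra (CForm.imp (CForm.cf φ ψ) (CForm.cf φ ψ'))

/-- The axiom scheme A7. -/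
def A7Scheme (Φ : Type) : CForm Φ → Prop := fun θ =>
  ∃ φ ψ1 ψ2 : CForm Φ, θ = CForm.imp (CForm.cf φ (CForm.or ψ1 ψ2))
    (CForm.or (CForm.cf φ ψ1) (CForm.cf φ ψ2))

/-- Satisfaction of `L^C(Φ)` formulas in a counterfactual structure. -/
def CStruct.satC {Φ : Type} (M : CStruct Φ) : M.World → CForm Φ → Prop
  | w, .atom p => M.val w p
  | _, .fls => False
  | w, .neg φ => ¬ CStruct.satC M w φ
  | w, .and φ ψ => CStruct.satC M w φ ∧ CStruct.satC M w ψ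
  | w, .cf φ ψ => ∀ v ∈ M.closest w (fun u => CStruct.satC M u φ), CStruct.satC M v ψ

/-! ## The signature with three binary endogenous variables -/

/-- The signature with endogenous variables `V = {X1, X2, X3}` (as `Fin 3`), each
with range `{0, 1}` (as `Fin 2`), and an arbitrary exogenous part. -/
abbrev S3 (E : Type) (eF : Fintype E) (er : E → Type)
    (erF : ∀ e, Fintype (er e)) (erN : ∀ e, Nonempty (er e)) : Signature :=
  { exo := E
    endo := Fin 3
    exoFin := eF
    endoFin := inferInstance
    endoDec := inferInstance
    exoRange := er
    range := fun _ => Fin 2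
    exoRangeFin := erF
    rangeFin := fun _ => inferInstance
    exoRangeNe := erN
    rangeNe := fun _ => ⟨0⟩ }

/-- The intervention `Xi ← 1`. -/
def gI {E : Type} {eF : Fintype E} {er : E → Type}
    {erF : ∀ e, Fintype (er e)} {erN : ∀ e, Nonempty (er e)}
    (i : Fin 3) : (S3 E eF er erF erN).Intervention :=
  fun j => if j = i then some (1 : Fin 2) else none

/-- The intervention `Xi ← 1; Xj ← 1`. -/
def gII {E : Type} {eF : Fintype E} {er : E → Type}
    {erF : ∀ e, Fintype (er e)} {erN : ∀ e, Nonempty (er e)}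
    (i j : Fin 3) : (S3 E eF er erF erN).Intervention :=
  fun k => if k = i ∨ k = j then some (1 : Fin 2) else none

/-- The formula φ : `[X1←1](X2 = 1) ∧ [X1←1](X3 = 0) ∧ [X2←1](X3 = 1) ∧
[X2←1](X1 = 0) ∧ [X3←1](X1 = 1) ∧ [X3←1](X2 = 0)`. -/
def phi3 {E : Type} {eF : Fintype E} {er : E → Type}
    {erF : ∀ e, Fintype (er e)} {erN : ∀ e, Nonempty (er e)} :
    LProp (S3 E eF er erF erN) :=
  .and (.basic (gI 0) 1 1) <| .and (.basic (gI 0) 2 0) <| .and (.basic (gI 1) 2 1) <|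
    .and (.basic (gI 1) 0 0) <| .and (.basic (gI 2) 0 1) (.basic (gI 2) 1 0)

/-!
Both directions go through the unique solutions of recursive models.

Given a recursive structure `M`, a world `w` and a variable order `≺` witnessing recursiveness
at `w`, let `F_X` return the value of `X` at the closest world to `w` where the variables `≺ X`
take the given values. This model respects `≺`, and the closest world satisfying `Y⃗ = y⃗` is its
solution under `Y⃗ ← y⃗`: imposing the values that the variables `≺ X` already have there does not
move that world, and then dropping the interventions on variables `≻ X` does not change the
value of `X`, by recursiveness.

Conversely, for a model `T` respecting `≺` and a context `u`, take the assignments as worlds.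
Around `a`, compare worlds lexicographically along `≺`: first by whether they violate the
equation of `X` in `T` with the equations violated by `a` frozen at their values in `a`, then by
the value of `X`. The least world satisfying `Y⃗ = y⃗` is then the solution under `Y⃗ ← y⃗` of the
frozen model, and at the actual solution of `T` nothing is frozen.
-/

open Function

theorem apply_eq_of_update_invariant {ι : Type*} [Finite ι] [DecidableEq ι] {β : ι → Type*}
    {γ : Sort*} (P : ι → Prop) (f : (∀ i, β i) → γ) {x y : ∀ i, β i}
    (hxy : ∀ i, ¬ P i → x i = y i)
    (hf : ∀ z : ∀ i, β i, (∀ i, ¬ P i → z i = x i) → ∀ i, P i → ∀ v, f (update z i v) = f z) :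
    f x = f y := by
  classical
  have := Fintype.ofFinite ι
  have hpiece : ∀ s : Finset ι, (∀ i ∈ s, P i) → f (s.piecewise y x) = f x := by
    intro s
    induction s using Finset.induction_on with
    | empty => simp
    | insert i s hi ih =>
      intro hs
      have hsP : ∀ j ∈ s, P j := fun j hj => hs j (Finset.mem_insert_of_mem hj)
      rw [Finset.piecewise_insert, hf _ (fun j hj => Finset.piecewise_eq_of_notMem _ _ _
        fun hjs => hj (hsP j hjs)) i (hs i (Finset.mem_insert_self i s)), ih hsP]
  have hy : (Finset.univ.filter P).piecewise y x = y := by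
    funext i
    by_cases hi : P i
    · simp [hi]
    · simp [hi, hxy i hi]
  rw [← hy, hpiece _ fun i hi => (Finset.mem_filter.mp hi).2]

theorem Pi.Lex.isWellOrder {ι : Type*} {β : ι → Type*} (r : ι → ι → Prop)
    [IsStrictTotalOrder ι r] [Finite ι] (s : ∀ i, β i → β i → Prop) [∀ i, IsWellOrder (β i) (s i)] :
    IsWellOrder (∀ i, β i) (Pi.Lex r (s _)) where
  wf := Pi.Lex.wellFounded r fun _ => IsWellFounded.wf
  toTrichotomous := Pi.trichotomous_lex r _ (Finite.wellFounded_of_trans_of_irrefl r)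

namespace CStruct

section Closest

variable {Φ : Type} (M : CStruct Φ)

theorem lt_trans_of_inW {w u v x : M.World} (hx : M.inW w x) (huv : M.lt w u v)
    (hvx : M.lt w v x) : M.lt w u x :=
  ⟨M.trans_on w u v x ⟨_, huv.1⟩ ⟨_, hvx.1⟩ hx huv.1 hvx.1,
    fun hxu => hvx.2 (M.trans_on w x u v hx ⟨_, huv.1⟩ ⟨_, hvx.1⟩ hxu huv.1)⟩

theorem closest_nonempty (w : M.World) {A : M.World → Prop} (hA : ∃ v, M.inW w v ∧ A v) :
    (M.closest w A).Nonempty := by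
  let r : {v // M.inW w v ∧ A v} → {v // M.inW w v ∧ A v} → Prop := fun x y => M.lt w x y
  have : IsTrans _ r := ⟨fun _ _ z => lt_trans_of_inW M z.2.1⟩
  have : Std.Irrefl r := ⟨fun _ h => h.2 h.1⟩
  obtain ⟨v, hv⟩ := hA
  obtain ⟨m, -, hmin⟩ := (Finite.wellFounded_of_trans_of_irrefl r).has_min Set.univ
    ⟨⟨v, hv⟩, trivial⟩
  exact ⟨m, m.2.1, m.2.2, fun v hv hlt => hmin ⟨v, ⟨_, hlt.1⟩, hv⟩ trivial hlt⟩

theorem closest_subsingleton (hM : M.totalOrd) (w : M.World) (A : M.World → Prop) :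
    (M.closest w A).Subsingleton := by
  rintro v ⟨hv, hAv, hvmin⟩ v' ⟨hv', hAv', hv'min⟩
  by_contra hne
  rcases hM w v v' hv hv' hne with h | h
  exacts [hv'min v hAv h, hvmin v' hAv' h]

end Closest

section OfOrders

variable {Φ W : Type} [Fintype W]

abbrev ofOrders (val : W → Φ → Prop) (lt : W → W → W → Prop) [∀ w, IsStrictTotalOrder W (lt w)]
    (least : ∀ w v, v ≠ w → lt w w v) : CStruct Φ where
  World := W
  worldFin := inferInstance
  val := val
  R w u v := u = v ∨ lt w u v
  self_mem w := ⟨w, Or.inl rfl⟩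
  refl_on _ _ _ := Or.inl rfl
  trans_on := by
    rintro w u v x - - - (rfl | huv) (rfl | hvx)
    exacts [Or.inl rfl, Or.inr hvx, Or.inr huv, Or.inr (_root_.trans huv hvx)]
  centered w u hu := ⟨Or.inr (least w u hu), by
    rintro (h | h)
    exacts [hu h, asymm h (least w u hu)]⟩

variable {val : W → Φ → Prop} {lt : W → W → W → Prop} [∀ w, IsStrictTotalOrder W (lt w)]
  {least : ∀ w v, v ≠ w → lt w w v}

theorem ofOrders_lt_iff {w u v : W} : (ofOrders val lt least).lt w u v ↔ lt w u v := by
  refine ⟨fun ⟨h, hn⟩ => h.resolve_left fun huv => hn (Or.inl huv.symm), fun h => ⟨Or.inr h, ?_⟩⟩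
  rintro (rfl | h')
  exacts [irrefl _ h, asymm h h']

theorem ofOrders_inW (w u : W) : (ofOrders val lt least).inW w u := ⟨u, Or.inl rfl⟩

theorem ofOrders_totalOrd : (ofOrders val lt least).totalOrd := fun (w u v : W) _ _ huv =>
  ((trichotomous_of (lt w) u v).imp_right fun h => h.resolve_left huv).imp
    ofOrders_lt_iff.mpr ofOrders_lt_iff.mpr

theorem ofOrders_closest_eq {w v : W} {A : W → Prop} (hv : A v)
    (hmin : ∀ u, A u → u ≠ v → lt w v u) : (ofOrders val lt least).closest w A = {v} := by
  ext u
  refine ⟨fun ⟨_, hu, hmin'⟩ => by_contra fun huv =>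
    hmin' v hv (ofOrders_lt_iff.mpr (hmin u hu huv)), ?_⟩
  intro hu
  rw [Set.mem_singleton_iff.mp hu]
  refine ⟨ofOrders_inW w v, hv, fun (u' : W) hu' hlt => ?_⟩
  have hlt' := ofOrders_lt_iff.mp hlt
  exact asymm hlt' (hmin u' hu' (ne_of_irrefl hlt'))

end OfOrders

end CStruct

namespace CausalModel

variable {S : Signature}

def RespectsOrder (T : CausalModel S) (vlt : S.endo → S.endo → Prop) : Prop :=
  ∀ X Y : S.endo, vlt X Y → ∀ (u : S.Ctx) (a a' : ∀ Z : {Z : S.endo // Z ≠ X}, S.range Z.1),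
    (∀ Z : {Z : S.endo // Z ≠ X}, Z.1 ≠ Y → a Z = a' Z) → T.F X u a = T.F X u a'

section Solutions

variable {T : CausalModel S} {vlt : S.endo → S.endo → Prop} [IsStrictTotalOrder S.endo vlt]

theorem RespectsOrder.F_congr (hT : T.RespectsOrder vlt) (X : S.endo) (u : S.Ctx)
    {c c' : ∀ Z : {Z : S.endo // Z ≠ X}, S.range Z.1}
    (h : ∀ Z : {Z : S.endo // Z ≠ X}, vlt Z.1 X → c Z = c' Z) :
    T.F X u c = T.F X u c' := by
  refine apply_eq_of_update_invariant (fun Z => ¬ vlt Z.1 X) (T.F X u)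
    (fun Z hZ => h Z (not_not.mp hZ))
    fun z _ Z hZ v => (hT X Z ?_ u _ _ fun Z' hZ' =>
      (update_of_ne (fun h => hZ' (congrArg Subtype.val h)) _ _).symm).symm
  rcases trichotomous_of vlt X Z.1 with h | h | h
  · exact h
  · exact absurd h.symm Z.2
  · exact absurd h hZ

variable (T vlt) in
open Classical in
/-- Computed along `vlt`; a solution of `T_g` only when `T` respects `vlt`. -/
noncomputable def sol (u : S.Ctx) (g : S.Intervention) : S.Asgn :=
  (Finite.wellFounded_of_trans_of_irrefl vlt).fix fun X ih =>
    (g X).getD (T.F X u fun Z => if h : vlt Z.1 X then ih Z.1 h else Classical.arbitrary _)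

theorem sol_of_some {u : S.Ctx} {g : S.Intervention} {X : S.endo} {x : S.range X}
    (h : g X = some x) : T.sol vlt u g X = x := by
  rw [sol, (Finite.wellFounded_of_trans_of_irrefl vlt).fix_eq, h, Option.getD_some]

theorem sol_of_none (hT : T.RespectsOrder vlt) {u : S.Ctx} {g : S.Intervention} {X : S.endo}
    (h : g X = none) : T.sol vlt u g X = T.F X u fun Z => T.sol vlt u g Z.1 := by
  rw [sol, (Finite.wellFounded_of_trans_of_irrefl vlt).fix_eq, h, Option.getD_none]
  exact hT.F_congr X u fun Z hZ => by simp only [dif_pos hZ]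

theorem isSolution_sol (hT : T.RespectsOrder vlt) (u : S.Ctx) (g : S.Intervention) :
    T.isSolution g u (T.sol vlt u g) :=
  fun _ => ⟨fun _ => sol_of_some, sol_of_none hT⟩

theorem RespectsOrder.eq_of_isSolution (hT : T.RespectsOrder vlt) {u : S.Ctx}
    {g : S.Intervention} {a b : S.Asgn} (ha : T.isSolution g u a) (hb : T.isSolution g u b) :
    a = b := by
  funext X
  induction X using (Finite.wellFounded_of_trans_of_irrefl vlt).induction with
  | _ X ih =>
    cases hgX : g X with
    | some x => rw [(ha X).1 x hgX, (hb X).1 x hgX]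
    | none =>
      rw [(ha X).2 hgX, (hb X).2 hgX]
      exact hT.F_congr X u fun Z hZ => ih Z.1 hZ

theorem RespectsOrder.sat_basic_iff (hT : T.RespectsOrder vlt) {u : S.Ctx} {g : S.Intervention}
    {a : S.Asgn} (ha : T.isSolution g u a) (X : S.endo) (x : S.range X) :
    T.sat u (.basic g X x) ↔ a X = x :=
  ⟨fun h => h a ha, fun h _ hb => hT.eq_of_isSolution hb ha ▸ h⟩

theorem sol_update_of_lt (hT : T.RespectsOrder vlt) (u : S.Ctx) (g : S.Intervention)
    {Y : S.endo} (y : S.range Y) {Z : S.endo} (hZY : vlt Z Y) :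
    T.sol vlt u (update g Y (some y)) Z = T.sol vlt u g Z := by
  induction Z using (Finite.wellFounded_of_trans_of_irrefl vlt).induction with
  | _ Z ih =>
    have hg : update g Y (some y) Z = g Z := update_of_ne (ne_of_irrefl hZY) _ _
    cases hgZ : g Z with
    | some z => rw [sol_of_some hgZ, sol_of_some (hg.trans hgZ)]
    | none =>
      rw [sol_of_none hT hgZ, sol_of_none hT (hg.trans hgZ)]
      exact hT.F_congr Z u fun W hW => ih W.1 hW (_root_.trans hW hZY)

end Solutions

open Classical in
noncomputable def devKey (T : CausalModel S) (u : S.Ctx) (b : S.Asgn) (X : S.endo) :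
    Bool × S.range X :=
  (decide (b X ≠ T.F X u fun Z => b Z.1), b X)

def devLt (T : CausalModel S) (vlt : S.endo → S.endo → Prop) (u : S.Ctx) :
    S.Asgn → S.Asgn → Prop :=
  InvImage (Pi.Lex vlt fun {X} => Prod.Lex (α := Bool) (β := S.range X) (· < ·) WellOrderingRel)
    (T.devKey u)

theorem devKey_injective (T : CausalModel S) (u : S.Ctx) : Injective (T.devKey u) :=
  fun _ _ h => funext fun X => congrArg Prod.snd (congrFun h X)

variable {T : CausalModel S} {vlt : S.endo → S.endo → Prop}

open Classical in
noncomputable def freeze (T : CausalModel S) (u : S.Ctx) (a : S.Asgn) : CausalModel S :=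
  ⟨fun X u' c => if a X = T.F X u (fun Z => a Z.1) then T.F X u' c else a X⟩

theorem RespectsOrder.freeze (hT : T.RespectsOrder vlt) (u : S.Ctx) (a : S.Asgn) :
    (T.freeze u a).RespectsOrder vlt := fun X Y hXY u' c c' h => by
  simp only [CausalModel.freeze]
  split_ifs
  exacts [hT X Y hXY u' c c' h, rfl]

theorem isSolution_freeze (u : S.Ctx) (a : S.Asgn) :
    (T.freeze u a).isSolution (fun _ => none) u a := by
  refine fun X => ⟨fun _ h => (by cases h), fun _ => ?_⟩
  simp only [freeze]
  split_ifs with h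
  exacts [h, rfl]

theorem freeze_eq_self {u : S.Ctx} {a : S.Asgn} (ha : T.isSolution (fun _ => none) u a) :
    T.freeze u a = T := by
  cases T
  simp only [freeze, mk.injEq]
  funext X u' c
  rw [if_pos ((ha X).2 rfl)]

variable [IsStrictTotalOrder S.endo vlt]

instance (u : S.Ctx) : IsWellOrder S.Asgn (T.devLt vlt u) :=
  have := Pi.Lex.isWellOrder vlt fun X =>
    Prod.Lex (α := Bool) (β := S.range X) (· < ·) WellOrderingRel
  { wf := InvImage.wf _ IsWellFounded.wf
    toTrichotomous := InvImage.trichotomous (devKey_injective T u) }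

theorem RespectsOrder.devKey_congr (hT : T.RespectsOrder vlt) (u : S.Ctx) {b c : S.Asgn}
    {X : S.endo} (h : ∀ Z, vlt Z X → b Z = c Z) (hX : b X = c X) :
    T.devKey u b X = T.devKey u c X := by
  rw [devKey, devKey, hX,
    hT.F_congr X u (c := fun Z => b Z.1) (c' := fun Z => c Z.1) fun Z hZ => h Z.1 hZ]

theorem RespectsOrder.sol_devLt (hT : T.RespectsOrder vlt) (u : S.Ctx) {g : S.Intervention}
    {b : S.Asgn} (hb : ∀ Z z, g Z = some z → b Z = z) (hne : b ≠ T.sol vlt u g) :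
    T.devLt vlt u (T.sol vlt u g) b := by
  obtain ⟨X, hX, hmin⟩ := (Finite.wellFounded_of_trans_of_irrefl vlt).has_min
    {X | T.sol vlt u g X ≠ b X} (Function.ne_iff.mp (Ne.symm hne))
  have hbelow : ∀ Z, vlt Z X → T.sol vlt u g Z = b Z := fun Z hZ =>
    not_not.mp fun h => hmin Z h hZ
  have hgX : g X = none := by
    cases h : g X with
    | none => rfl
    | some x => exact absurd ((sol_of_some h).trans (hb X x h).symm) hX
  have hF : (T.F X u fun Z => T.sol vlt u g Z.1) = T.F X u fun Z => b Z.1 :=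
    hT.F_congr X u fun Z hZ => hbelow Z.1 hZ
  refine ⟨X, fun Z hZ => hT.devKey_congr u (fun Z' hZ' => hbelow Z' (_root_.trans hZ' hZ))
    (hbelow Z hZ), Prod.Lex.left _ _ ?_⟩
  have hb : b X ≠ T.F X u fun Z => b Z.1 := by rwa [← hF, ← sol_of_none hT hgX, ne_comm]
  simp [← sol_of_none hT hgX, hb]

theorem RespectsOrder.sol_freeze (hT : T.RespectsOrder vlt) (u : S.Ctx) (a : S.Asgn) :
    (T.freeze u a).sol vlt u (fun _ => none) = a :=
  (hT.freeze u a).eq_of_isSolution (isSolution_sol (hT.freeze u a) u _) (isSolution_freeze u a)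

/-- The solution of `T.freeze u a` without intervention is `a`, which puts `a` first around `a`. -/
noncomputable abbrev RespectsOrder.toCStruct (hT : T.RespectsOrder vlt) (u : S.Ctx) :
    CStruct S.Atom :=
  CStruct.ofOrders (fun b p => b p.1 = p.2) (fun a => (T.freeze u a).devLt vlt u) fun a b hb => by
    have := (hT.freeze u a).sol_devLt u (g := fun _ => none) (b := b) (fun _ _ h => by cases h)
      (by rwa [hT.sol_freeze])
    rwa [hT.sol_freeze] at this

theorem RespectsOrder.satBasic_toCStruct (hT : T.RespectsOrder vlt) (u : S.Ctx) (a : S.Asgn)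
    (g : S.Intervention) (X : S.endo) (x : S.range X) :
    satBasic S (hT.toCStruct u) a g X x ↔ (T.freeze u a).sol vlt u g X = x := by
  have hsol := isSolution_sol (hT.freeze u a) u g
  unfold satBasic CStruct.cfSat
  rw [CStruct.ofOrders_closest_eq (A := intAnte S (hT.toCStruct u) g) (fun Y y h => (hsol Y).1 y h)
    fun b hb hne => (hT.freeze u a).sol_devLt u hb hne]
  simp only [Set.mem_singleton_iff, forall_eq]

theorem RespectsOrder.mRec_toCStruct (hT : T.RespectsOrder vlt) (u : S.Ctx) :
    MRec S (hT.toCStruct u) := by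
  refine ⟨fun b X => ⟨b X, rfl, fun _ h => h.symm⟩,
    fun _ b => ⟨b, CStruct.ofOrders_inW _ _, fun _ => rfl⟩, CStruct.ofOrders_totalOrd,
    fun a => ⟨vlt, inferInstance, fun W' Y hWY g _ _ y w' => ?_⟩⟩
  rw [hT.satBasic_toCStruct, hT.satBasic_toCStruct,
    sol_update_of_lt (hT.freeze u a) u g y hWY]

theorem RespectsOrder.sat_basic_iff_toCStruct (hT : T.RespectsOrder vlt) (u : S.Ctx)
    (g : S.Intervention) (X : S.endo) (x : S.range X) :
    T.sat u (.basic g X x) ↔ satBasic S (hT.toCStruct u) (T.sol vlt u fun _ => none) g X x := by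
  rw [hT.satBasic_toCStruct, freeze_eq_self (isSolution_sol hT u _),
    hT.sat_basic_iff (isSolution_sol hT u g)]

end CausalModel

namespace CStruct

variable {S : Signature} {M : CStruct S.Atom}

def RecursiveAt (M : CStruct S.Atom) (w : M.World) (vlt : S.endo → S.endo → Prop) : Prop :=
  ∀ W' Y : S.endo, vlt W' Y → ∀ g : S.Intervention, g W' = none → g Y = none →
    ∀ (y : S.range Y) (w' : S.range W'),
      (satBasic S M w (update g Y (some y)) W' w' ↔ satBasic S M w g W' w')

noncomputable def value (hM : MRec S M) (v : M.World) (X : S.endo) : S.range X :=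
  (hM.1 v X).exists.choose

theorem val_iff_value_eq (hM : MRec S M) {v : M.World} {X : S.endo} {x : S.range X} :
    M.val v ⟨X, x⟩ ↔ value hM v X = x :=
  ⟨fun h => (hM.1 v X).unique (hM.1 v X).exists.choose_spec h,
    fun h => h ▸ (hM.1 v X).exists.choose_spec⟩

theorem exists_intAnte (hM : MRec S M) (w : M.World) (g : S.Intervention) :
    ∃ v, M.inW w v ∧ intAnte S M g v := by
  obtain ⟨v, hv, hval⟩ := hM.2.1 w fun X => (g X).getD (Classical.arbitrary _)
  exact ⟨v, hv, fun Y y hy => by simpa [hy] using hval Y⟩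

noncomputable def closestWorld (hM : MRec S M) (w : M.World) (g : S.Intervention) : M.World :=
  (M.closest_nonempty w (exists_intAnte hM w g)).some

theorem closestWorld_mem (hM : MRec S M) (w : M.World) (g : S.Intervention) :
    closestWorld hM w g ∈ M.closest w (intAnte S M g) :=
  Set.Nonempty.some_mem _

theorem closest_intAnte_eq (hM : MRec S M) (w : M.World) (g : S.Intervention) :
    M.closest w (intAnte S M g) = {closestWorld hM w g} :=
  (M.closest_subsingleton hM.2.2.1 w _).eq_singleton_of_mem (closestWorld_mem hM w g)

theorem satBasic_iff_value (hM : MRec S M) {w : M.World} {g : S.Intervention} {X : S.endo}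
    {x : S.range X} : satBasic S M w g X x ↔ value hM (closestWorld hM w g) X = x := by
  unfold satBasic cfSat
  rw [closest_intAnte_eq hM]
  simp [val_iff_value_eq hM]

theorem closestWorld_eq_of_le (hM : MRec S M) (w : M.World) {g g' : S.Intervention}
    (hle : ∀ Z z, g Z = some z → g' Z = some z) (h : intAnte S M g' (closestWorld hM w g)) :
    closestWorld hM w g' = closestWorld hM w g := by
  obtain ⟨hw, -, hmin⟩ := closestWorld_mem hM w g
  have : closestWorld hM w g ∈ M.closest w (intAnte S M g') :=
    ⟨hw, h, fun v hv => hmin v fun Y y hy => hv Y y (hle Y y hy)⟩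
  rw [closest_intAnte_eq hM] at this
  exact this.symm

variable {w : M.World} {vlt : S.endo → S.endo → Prop} [IsStrictTotalOrder S.endo vlt]

theorem RecursiveAt.value_update (hM : MRec S M) (hR : M.RecursiveAt w vlt) {X Y : S.endo}
    (hXY : vlt X Y) {g : S.Intervention} (hgX : g X = none) (o : Option (S.range Y)) :
    value hM (closestWorld hM w (update g Y o)) X =
      value hM (closestWorld hM w (update g Y none)) X := by
  cases o with
  | none => rfl
  | some y =>
    have hg₀X : update g Y none X = none := by rwa [update_of_ne (ne_of_irrefl hXY)]
    have := (hR X Y hXY _ hg₀X (update_self ..) y _).mpr ((satBasic_iff_value hM).mpr rfl)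
    rwa [update_idem, satBasic_iff_value hM] at this

theorem RecursiveAt.value_congr (hM : MRec S M) (hR : M.RecursiveAt w vlt) {X : S.endo}
    {g g' : S.Intervention} (hgX : g X = none) (h : ∀ Z, ¬ vlt X Z → g Z = g' Z) :
    value hM (closestWorld hM w g) X = value hM (closestWorld hM w g') X := by
  refine apply_eq_of_update_invariant (vlt X) (fun g => value hM (closestWorld hM w g) X) h
    fun z hz Y hY v => ?_
  have hzX : z X = none := (hz X (irrefl X)).trans hgX
  rw [hR.value_update hM hY hzX, ← hR.value_update hM hY hzX (z Y), update_eq_self]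

open Classical in
noncomputable def toCausalModel (hM : MRec S M) (w : M.World) (vlt : S.endo → S.endo → Prop)
    [IsStrictTotalOrder S.endo vlt] : CausalModel S :=
  ⟨fun X _ c => value hM
    (closestWorld hM w fun Z => if h : vlt Z X then some (c ⟨Z, ne_of_irrefl h⟩) else none) X⟩

theorem respectsOrder_toCausalModel (hM : MRec S M) :
    (toCausalModel hM w vlt).RespectsOrder vlt := fun X Y hXY _ c c' h => by
  simp only [toCausalModel]
  congr 2
  funext Z
  split_ifs with hZ
  · rw [h ⟨Z, ne_of_irrefl hZ⟩ (ne_of_irrefl (_root_.trans hZ hXY))]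
  · rfl

theorem RecursiveAt.isSolution_toCausalModel (hM : MRec S M) (hR : M.RecursiveAt w vlt)
    (u : S.Ctx) (g : S.Intervention) :
    (toCausalModel hM w vlt).isSolution g u (fun X => value hM (closestWorld hM w g) X) := by
  set a : S.Asgn := fun X => value hM (closestWorld hM w g) X
  have ha : ∀ Z z, g Z = some z → a Z = z := fun Z z hz =>
    (val_iff_value_eq hM).mp ((closestWorld_mem hM w g).2.1 Z z hz)
  refine fun X => ⟨ha X, fun hgX => ?_⟩
  classical
  let g' : S.Intervention := fun Z => if vlt Z X then some (a Z) else g Z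
  have hcw : closestWorld hM w g' = closestWorld hM w g := by
    refine closestWorld_eq_of_le hM w (fun Z z hz => ?_) fun Z z hz => ?_
    · simp only [g']
      split_ifs
      exacts [congrArg some (ha Z z hz), hz]
    · simp only [g'] at hz
      split_ifs at hz
      · cases hz
        exact (val_iff_value_eq hM).mpr rfl
      · exact (closestWorld_mem hM w g).2.1 Z z hz
  calc a X = value hM (closestWorld hM w g') X := by rw [hcw]
    _ = _ := hR.value_congr hM (by simp [g', hgX, irrefl X]) fun Z hZ => by
      rcases trichotomous_of vlt Z X with hZX | rfl | hXZ
      · simp [g', hZX]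
      · simp [g', hgX, irrefl Z]
      · exact absurd hXZ hZ

theorem RecursiveAt.sat_basic_iff (hM : MRec S M) (hR : M.RecursiveAt w vlt) (u : S.Ctx)
    (g : S.Intervention) (X : S.endo) (x : S.range X) :
    (toCausalModel hM w vlt).sat u (.basic g X x) ↔ satBasic S M w g X x := by
  rw [(respectsOrder_toCausalModel hM).sat_basic_iff (hR.isSolution_toCausalModel hM u g),
    satBasic_iff_value hM]

end CStruct

theorem CausalModel.sat_iff_satL_of_basic {S : Signature} {T : CausalModel S} {u : S.Ctx}
    {M : CStruct S.Atom} {w : M.World}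
    (h : ∀ g X x, T.sat u (.basic g X x) ↔ satBasic S M w g X x) :
    ∀ φ : LProp S, T.sat u φ ↔ satL M w φ
  | .basic g X x => h g X x
  | .neg φ => not_congr (sat_iff_satL_of_basic h φ)
  | .and φ ψ => and_congr (sat_iff_satL_of_basic h φ) (sat_iff_satL_of_basic h ψ)

/-- A formula `φ ∈ Lprop(S)` is valid with respect to `Trec(S)`
iff it is valid with respect to `Mrec(Φ_S)`. -/
theorem stmt9 (S : Signature) (φ : LProp S) :
    (∀ T : CausalModel S, T.Recursive → ∀ u : S.Ctx, T.sat u φ) ↔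
    (∀ M : CStruct S.Atom, MRec S M → ∀ w : M.World, satL M w φ) := by
  constructor
  · intro h M hM w
    obtain ⟨vlt, _, hR : M.RecursiveAt w vlt⟩ := hM.2.2.2 w
    let u : S.Ctx := fun _ => Classical.arbitrary _
    exact (CausalModel.sat_iff_satL_of_basic (hR.sat_basic_iff hM u) φ).mp
      (h _ ⟨vlt, inferInstance, CStruct.respectsOrder_toCausalModel hM⟩ u)
  · rintro h T ⟨vlt, _, hT : T.RespectsOrder vlt⟩ u
    exact (CausalModel.sat_iff_satL_of_basic (hT.sat_basic_iff_toCStruct u) φ).mpr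
      (h _ (hT.mRec_toCStruct u) _)
end

section
/- The formula ¬φ, where φ is the formula [X1←1](X2 = 1) ∧ [X1←1](X3 = 0) ∧ [X2←1](X3 = 1) ∧ [X2←1](X1 = 0) ∧ [X3←1](X1 = 1) ∧ [X3←1](X2 = 0), is valid with respect to the class M_f(Φ_S) of full acceptable counterfactual structures (and hence also with respect to M_f^+(Φ_S)), for the signature S with endogenous variables V = {X1, X2, X3}, each with range {0, 1}. -/
/-!
A closest `Xi = 1`-world `v` makes the next variable `1`, and every closest world making that
variable `1` falsifies `Xi = 1`; so some closest world for the next variable lies strictly below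
`v`. Going once around the cycle `X1 → X2 → X3 → X1` produces an `X1 = 1`-world strictly below a
closest one, which is impossible. Fullness supplies the first `X1 = 1`-world, and finiteness of
the set of worlds supplies closest worlds below any given one.
-/

namespace CStruct

variable {Φ : Type} (M : CStruct Φ) {w : M.World}

theorem lt_trans {u v x : M.World} (huv : M.lt w u v) (hvx : M.lt w v x) (hx : M.inW w x) :
    M.lt w u x :=
  have hu : M.inW w u := ⟨v, huv.1⟩
  have hv : M.inW w v := ⟨x, hvx.1⟩
  ⟨M.trans_on w u v x hu hv hx huv.1 hvx.1,
    fun hxu => hvx.2 (M.trans_on w x u v hx hu hv hxu huv.1)⟩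

variable (w) in
theorem wellFounded_lt : WellFounded fun u v : {u // M.inW w u} => M.lt w u v :=
  haveI : IsTrans {u // M.inW w u} (fun u v => M.lt w u v) :=
    ⟨fun _ _ x huv hvx => M.lt_trans huv hvx x.2⟩
  haveI : Std.Irrefl (fun u v : {u // M.inW w u} => M.lt w u v) := ⟨fun _ h => h.2 h.1⟩
  Finite.wellFounded_of_trans_of_irrefl _

theorem exists_mem_closest_le {A : M.World → Prop} {v : M.World} (hv : M.inW w v) (hA : A v) :
    ∃ m ∈ M.closest w A, M.R w m v := by
  obtain ⟨⟨m, hm⟩, ⟨hAm, hmv⟩, hmin⟩ := (M.wellFounded_lt w).has_min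
    {u | A u.1 ∧ M.R w u.1 v} ⟨⟨v, hv⟩, hA, M.refl_on w v hv⟩
  refine ⟨m, ⟨hm, hAm, fun u hAu hum => ?_⟩, hmv⟩
  have hu : M.inW w u := ⟨m, hum.1⟩
  exact hmin ⟨u, hu⟩ ⟨hAu, M.trans_on w u m v hu hm hv hum.1 hmv⟩ hum

theorem mem_closest_of_R {A : M.World → Prop} {u v : M.World} (hu : u ∈ M.closest w A)
    (hAv : A v) (hvu : M.R w v u) : v ∈ M.closest w A := by
  have hv : M.inW w v := ⟨u, hvu⟩
  refine ⟨hv, hAv, fun x hAx hxv => hu.2.2 x hAx ?_⟩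
  have hx : M.inW w x := ⟨v, hxv.1⟩
  exact ⟨M.trans_on w x v u hx hv hu.1 hxv.1 hvu,
    fun hux => hxv.2 (M.trans_on w v u x hv hu.1 hx hvu hux)⟩

theorem exists_mem_closest_lt_of_cfSat {A B : M.World → Prop} (hAB : M.cfSat w A B)
    (hBA : M.cfSat w B fun u => ¬ A u) {v : M.World} (hv : v ∈ M.closest w A) :
    ∃ u ∈ M.closest w B, M.lt w u v := by
  obtain ⟨u, hu, huv⟩ := M.exists_mem_closest_le hv.1 (hAB v hv)
  exact ⟨u, hu, huv, fun hvu => hBA v (M.mem_closest_of_R hu (hAB v hv) hvu) hv.2.1⟩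

theorem false_of_cfSat_cycle {A B C : M.World → Prop} (hA : ∃ v, M.inW w v ∧ A v)
    (hAB : M.cfSat w A B) (hAC : M.cfSat w A fun u => ¬ C u)
    (hBC : M.cfSat w B C) (hBA : M.cfSat w B fun u => ¬ A u)
    (hCA : M.cfSat w C A) (hCB : M.cfSat w C fun u => ¬ B u) : False := by
  obtain ⟨v, hv, hAv⟩ := hA
  obtain ⟨v₁, h₁, -⟩ := M.exists_mem_closest_le hv hAv
  obtain ⟨v₂, h₂, h₂₁⟩ := M.exists_mem_closest_lt_of_cfSat hAB hBA h₁
  obtain ⟨v₃, h₃, h₃₂⟩ := M.exists_mem_closest_lt_of_cfSat hBC hCB h₂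
  obtain ⟨v₄, h₄, h₄₃⟩ := M.exists_mem_closest_lt_of_cfSat hCA hAC h₃
  exact h₁.2.2 v₄ h₄.2.1 (M.lt_trans h₄₃ (M.lt_trans h₃₂ h₂₁ h₁.1) h₁.1)

end CStruct

theorem Acceptable.not_val_of_val {S : Signature} {M : CStruct S.Atom} (hacc : Acceptable S M)
    {v : M.World} {X : S.endo} {x y : S.range X} (hxy : x ≠ y) (hx : M.val v ⟨X, x⟩) :
    ¬ M.val v ⟨X, y⟩ :=
  fun hy => hxy ((hacc v X).unique hx hy)

theorem intAnte_gI {E : Type} {eF : Fintype E} {er : E → Type}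
    {erF : ∀ e, Fintype (er e)} {erN : ∀ e, Nonempty (er e)}
    (M : CStruct (S3 E eF er erF erN).Atom) (i : Fin 3) :
    intAnte (S3 E eF er erF erN) M (gI i) = fun v => M.val v ⟨i, 1⟩ := by
  ext v
  simp [intAnte, gI]

/-- `¬φ`, where `φ` is
`[X1←1](X2=1) ∧ [X1←1](X3=0) ∧ [X2←1](X3=1) ∧ [X2←1](X1=0) ∧ [X3←1](X1=1) ∧
[X3←1](X2=0)`, is valid with respect to the class `M_f(Φ_S)` of full acceptable
counterfactual structures (hence also with respect to `M_f⁺(Φ_S)`), for the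
signature with endogenous variables `{X1, X2, X3}`, each with range `{0, 1}`. -/
theorem stmt11 (E : Type) (eF : Fintype E) (er : E → Type)
    (erF : ∀ e, Fintype (er e)) (erN : ∀ e, Nonempty (er e))
    (M : CStruct (S3 E eF er erF erN).Atom)
    (hacc : Acceptable (S3 E eF er erF erN) M)
    (hfull : Full (S3 E eF er erF erN) M) (w : M.World) :
    satL M w (.neg phi3) := by
  rintro ⟨h12, h13, h23, h21, h31, h32⟩
  simp only [satL, satBasic, intAnte_gI] at h12 h13 h23 h21 h31 h32
  have zero_of_one {i j : Fin 3}
      (h : M.cfSat w (fun v => M.val v ⟨i, 1⟩) fun v => M.val v ⟨j, 0⟩) :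
      M.cfSat w (fun v => M.val v ⟨i, 1⟩) fun v => ¬ M.val v ⟨j, 1⟩ :=
    fun v hv => hacc.not_val_of_val (show (0 : Fin 2) ≠ 1 by decide) (h v hv)
  obtain ⟨v, hv, hval⟩ := hfull w fun _ => 1
  exact M.false_of_cfSat_cycle ⟨v, hv, hval 0⟩ h12 (zero_of_one h13) h23 (zero_of_one h21)
    h31 (zero_of_one h32)
end

section
/- For all formulas φ1, φ2, φ3 of the counterfactual language L^C(Φ), the formula ((φ1 > φ2) ∧ (φ2 > φ3)) → ((φ1 ∨ φ2) > φ3) is provable in the axiom system AX. -/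
/- The theorem is an instance of cut, `((A > B) ∧ ((A ∧ B) > C)) → (A > C)`, with `A = φ1 ∨ φ2`:
A4 and A1 give `A > φ2` from `φ1 > φ2`, and `(A ∧ φ2) > φ3` is `φ2 > φ3` after RA1.
Cut itself holds because `B → C` follows from `A` in two cases: under `A ∧ B` by `(A ∧ B) > C`,
under `A ∧ ¬B` trivially; A4 and RA1 glue them to `A > (B → C)`, and A2 with `A > B` yields `A > C`. -/

namespace CForm

variable {Φ : Type} (v : CForm Φ → Prop) (φ ψ : CForm Φ)

@[simp] lemma evalB_neg : evalB v (neg φ) ↔ ¬ evalB v φ := Iff.rfl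

@[simp] lemma evalB_and : evalB v (and φ ψ) ↔ evalB v φ ∧ evalB v ψ := Iff.rfl

@[simp] lemma evalB_or : evalB v (or φ ψ) ↔ evalB v φ ∨ evalB v ψ := by
  simp only [or, evalB_neg, evalB_and, ← not_or, not_not]

@[simp] lemma evalB_imp : evalB v (imp φ ψ) ↔ (evalB v φ → evalB v ψ) := by
  simp only [imp, evalB_or, evalB_neg, imp_iff_not_or]

@[simp] lemma evalB_iff : evalB v (iff φ ψ) ↔ (evalB v φ ↔ evalB v ψ) := by
  simp only [iff, evalB_and, evalB_imp, iff_def]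

end CForm

local infixr:25 " ⇒ " => CForm.imp
local infixl:35 " ⋀ " => CForm.and
local infixl:30 " ⋁ " => CForm.or
local infix:28 " ▷ " => CForm.cf

namespace AXProv

open CForm (evalB_neg evalB_and evalB_or evalB_imp)

variable {Φ : Type} {extra : CForm Φ → Prop}

lemma mp_foldr {ψ : CForm Φ} : ∀ {l : List (CForm Φ)}, l.Forall (AXProv Φ extra) →
    AXProv Φ extra (l.foldr CForm.imp ψ) → AXProv Φ extra ψ
  | [], _, h => h
  | [_], hφ, h => mp h hφ
  | _ :: _ :: _, ⟨hφ, hl⟩, h => mp_foldr hl (mp h hφ)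

lemma cf_of_imp {φ ψ : CForm Φ} (h : ∀ v, φ.evalB v → ψ.evalB v) : AXProv Φ extra (φ ▷ ψ) :=
  mp (ra2 (taut fun v => by simpa using h v)) (a1 φ)

lemma cf_congr_left {φ φ' : CForm Φ} (ψ : CForm Φ) (h : ∀ v, φ.evalB v ↔ φ'.evalB v) :
    AXProv Φ extra ((φ ▷ ψ) ⇒ (φ' ▷ ψ)) :=
  ra1 (taut fun v => by simpa using h v)

lemma cf_mono_right {ψ ψ' : CForm Φ} (φ : CForm Φ) (h : ∀ v, ψ.evalB v → ψ'.evalB v) :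
    AXProv Φ extra ((φ ▷ ψ) ⇒ (φ ▷ ψ')) :=
  ra2 (taut fun v => by simpa using h v)

lemma cf_or_of_cf (φ1 φ2 : CForm Φ) : AXProv Φ extra ((φ1 ▷ φ2) ⇒ (φ1 ⋁ φ2 ▷ φ2)) := by
  refine mp_foldr (l := [φ2 ▷ φ2, (φ1 ▷ φ2) ⋀ (φ2 ▷ φ2) ⇒ (φ1 ⋁ φ2 ▷ φ2)])
    ⟨a1 φ2, a4 φ1 φ2 φ2⟩ (taut fun v => ?_)
  simp only [List.foldr_cons, List.foldr_nil, evalB_imp, evalB_and]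
  tauto

lemma cf_cut (A B C : CForm Φ) : AXProv Φ extra ((A ▷ B) ⋀ (A ⋀ B ▷ C) ⇒ (A ▷ C)) := by
  let D := A ⋀ B ⋁ A ⋀ CForm.neg B
  refine mp_foldr (l := [(A ⋀ B ▷ C) ⇒ (A ⋀ B ▷ (B ⇒ C)), A ⋀ CForm.neg B ▷ (B ⇒ C),
    (A ⋀ B ▷ (B ⇒ C)) ⋀ (A ⋀ CForm.neg B ▷ (B ⇒ C)) ⇒ (D ▷ (B ⇒ C)),
    (D ▷ (B ⇒ C)) ⇒ (A ▷ (B ⇒ C)),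
    (A ▷ B) ⋀ (A ▷ (B ⇒ C)) ⇒ (A ▷ B ⋀ (B ⇒ C)),
    (A ▷ B ⋀ (B ⇒ C)) ⇒ (A ▷ C)]) ?_ (taut fun v => ?_)
  · refine ⟨cf_mono_right _ ?_, cf_of_imp ?_, a4 _ _ _, cf_congr_left _ ?_, a2 _ _ _,
      cf_mono_right _ ?_⟩
    all_goals
      intro v
      simp only [D, evalB_neg, evalB_and, evalB_or, evalB_imp]
      tauto
  · simp only [List.foldr_cons, List.foldr_nil, evalB_imp, evalB_and]
    tauto

end AXProv

/-- For all formulas `φ1 φ2 φ3` of `L^C(Φ)`,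
`((φ1 > φ2) ∧ (φ2 > φ3)) → ((φ1 ∨ φ2) > φ3)` is provable in AX. -/
theorem stmt13 (Φ : Type) (φ1 φ2 φ3 : CForm Φ) :
    AXProv Φ (fun _ => False)
      (CForm.imp (CForm.and (CForm.cf φ1 φ2) (CForm.cf φ2 φ3))
        (CForm.cf (CForm.or φ1 φ2) φ3)) := by
  open AXProv CForm in
  refine mp_foldr (l := [(φ1 ▷ φ2) ⇒ (φ1 ⋁ φ2 ▷ φ2), (φ2 ▷ φ3) ⇒ ((φ1 ⋁ φ2) ⋀ φ2 ▷ φ3),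
    (φ1 ⋁ φ2 ▷ φ2) ⋀ ((φ1 ⋁ φ2) ⋀ φ2 ▷ φ3) ⇒ (φ1 ⋁ φ2 ▷ φ3)]) ?_ (taut fun v => ?_)
  · refine ⟨cf_or_of_cf φ1 φ2, cf_congr_left φ3 fun v => ?_, cf_cut _ φ2 φ3⟩
    simp only [evalB_and, evalB_or]
    tauto
  · simp only [List.foldr_cons, List.foldr_nil, evalB_imp, evalB_and]
    tauto
end

section
/- Over the primitive propositions Φ_S of a signature S, every instance of axiom scheme C2 (Definiteness), read as the counterfactual formula ⋁_{x ∈ R(X)} ((Y⃗ = y⃗) > (X = x)) where Y⃗ = y⃗ is a conjunction of atoms with distinct variables, is provable in the system AX+ (AX together with A7) augmented with the axiom scheme V1: ⋁_{x ∈ R(X)} X = x. -/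
/-- The axiom scheme V1 over `Φ_S`: `⋁_{x ∈ R(X)} X = x`. -/
def V1Scheme (S : Signature) : CForm S.Atom → Prop := fun θ =>
  ∃ X : S.endo,
    θ = CForm.bigOr
      (((Finset.univ : Finset (S.range X)).toList).map (fun x => CForm.atom ⟨X, x⟩))

/-!
V1 says that `X` takes some value; by necessitation (A1 with RA2) this disjunction holds
counterfactually under any antecedent, and A7 distributes `>` over the disjunction.
-/

namespace AXProv

variable {Φ : Type} {extra : CForm Φ → Prop}

theorem imp_of_right {θ : CForm Φ} (φ : CForm Φ) (h : AXProv Φ extra θ) :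
    AXProv Φ extra (CForm.imp φ θ) := by
  have t : CForm.Taut (CForm.imp θ (CForm.imp φ θ)) := by
    intro v; simp only [CForm.imp, CForm.or, CForm.evalB]; tauto
  exact mp (taut t) h

theorem cf_of_prov {ψ : CForm Φ} (φ : CForm Φ) (h : AXProv Φ extra ψ) :
    AXProv Φ extra (CForm.cf φ ψ) :=
  mp (ra2 (imp_of_right φ h)) (a1 φ)

theorem imp_or_of_imp_or {a b c d : CForm Φ}
    (h : AXProv Φ extra (CForm.imp a (CForm.or b c)))
    (hcd : AXProv Φ extra (CForm.imp c d)) :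
    AXProv Φ extra (CForm.imp a (CForm.or b d)) := by
  have t : CForm.Taut (CForm.imp (CForm.imp c d)
      (CForm.imp (CForm.imp a (CForm.or b c)) (CForm.imp a (CForm.or b d)))) := by
    intro v; simp only [CForm.imp, CForm.or, CForm.evalB]; tauto
  exact mp (mp (taut t) hcd) h

theorem cf_bigOr_imp_bigOr_cf (hA7 : ∀ θ, A7Scheme Φ θ → extra θ) (φ : CForm Φ) :
    ∀ L : List (CForm Φ), L ≠ [] →
      AXProv Φ extra (CForm.imp (CForm.cf φ (CForm.bigOr L)) (CForm.bigOr (L.map (CForm.cf φ))))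
  | [], h => absurd rfl h
  | [ψ], _ => taut fun v => by simp only [CForm.imp, CForm.or, CForm.evalB]; tauto
  | ψ :: ψ' :: L, _ =>
    imp_or_of_imp_or (ax (hA7 _ ⟨φ, ψ, CForm.bigOr (ψ' :: L), rfl⟩))
      (cf_bigOr_imp_bigOr_cf hA7 φ (ψ' :: L) (List.cons_ne_nil ψ' L))

theorem bigOr_cf_of_cf_bigOr (hA7 : ∀ θ, A7Scheme Φ θ → extra θ) {φ : CForm Φ}
    {L : List (CForm Φ)} (hL : L ≠ []) (h : AXProv Φ extra (CForm.cf φ (CForm.bigOr L))) :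
    AXProv Φ extra (CForm.bigOr (L.map (CForm.cf φ))) :=
  mp (cf_bigOr_imp_bigOr_cf hA7 φ L hL) h

end AXProv

theorem stmt15_general (S : Signature) (l : List S.Atom) (X : S.endo) :
    AXProv S.Atom (fun θ => A7Scheme S.Atom θ ∨ V1Scheme S θ)
      (CForm.bigOr (((Finset.univ : Finset (S.range X)).toList).map
        (fun x => CForm.cf (CForm.bigAnd (l.map CForm.atom)) (CForm.atom ⟨X, x⟩)))) := by
  have hV1 : AXProv S.Atom (fun θ => A7Scheme S.Atom θ ∨ V1Scheme S θ)
      (CForm.bigOr (((Finset.univ : Finset (S.range X)).toList).map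
        (fun x => CForm.atom ⟨X, x⟩))) :=
    .ax (Or.inr ⟨X, rfl⟩)
  have hne : ((Finset.univ : Finset (S.range X)).toList).map
      (fun x => CForm.atom (Φ := S.Atom) ⟨X, x⟩) ≠ [] := by
    simp [Finset.univ_nonempty.ne_empty]
  have h := AXProv.bigOr_cf_of_cf_bigOr (fun _ => Or.inl) hne
    (AXProv.cf_of_prov (CForm.bigAnd (l.map CForm.atom)) hV1)
  rwa [List.map_map] at h

/-- Every instance of C2 (Definiteness), read as the counterfactual
formula `⋁_{x ∈ R(X)} ((Y⃗ = y⃗) > (X = x))` with `Y⃗ = y⃗` a conjunction of atoms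
with distinct variables, is provable in AX⁺ (AX together with A7) augmented
with the scheme V1. -/
theorem stmt15 (S : Signature) (l : List S.Atom) (hl : (l.map Sigma.fst).Nodup)
    (X : S.endo) :
    AXProv S.Atom (fun θ => A7Scheme S.Atom θ ∨ V1Scheme S θ)
      (CForm.bigOr (((Finset.univ : Finset (S.range X)).toList).map
        (fun x => CForm.cf (CForm.bigAnd (l.map CForm.atom)) (CForm.atom ⟨X, x⟩)))) :=
  stmt15_general S l X
end

section
/- For every signature S and every formula φ of the language Lex(S), there is a formula φ' of the sublanguage Lprop(S) such that φ ↔ φ' is valid with respect to the class Tun(S) (and hence also with respect to Trec(S) ⊆ Tun(S)): for every T ∈ Tun(S) and every context u⃗, (T, u⃗) ⊨ φ iff (T, u⃗) ⊨ φ'. -/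
/-! When the equations of `T_{Y⃗←y⃗}` have exactly one solution `a` in context `u⃗`, the formula
`[Y⃗←y⃗]ψ` holds iff `ψ` holds at `a`. Hence `[Y⃗←y⃗]` commutes with `¬` and `∧`, and `[Y⃗←y⃗]ψ` is
equivalent to `ψ` with every atom `X = x` replaced by `[Y⃗←y⃗](X = x)`. Recursive models have
unique solutions: along the order of the variables, each value is forced by the values of the
earlier variables, which gives both the construction of the solution and its uniqueness. -/

theorem Function.apply_eq_of_forall_update_eq {ι : Type*} [Finite ι] [DecidableEq ι]
    {β : ι → Type*} {γ : Sort*} {f : (∀ i, β i) → γ} {p : ι → Prop}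
    (hf : ∀ a i b, p i → f (Function.update a i b) = f a) {a a' : ∀ i, β i}
    (h : ∀ i, ¬ p i → a i = a' i) : f a = f a' := by
  have := Fintype.ofFinite ι
  suffices key : ∀ (s : Finset ι) (a : ∀ i, β i), (∀ i, a i ≠ a' i → i ∈ s ∧ p i) →
      f a = f a' from
    key Finset.univ a fun i hi => ⟨Finset.mem_univ i, by_contra fun hp => hi (h i hp)⟩
  intro s
  induction s using Finset.induction_on with
  | empty =>
    intro a ha
    congr
    funext i
    by_contra hi
    simpa using (ha i hi).1
  | insert j s _ ih =>
    intro a ha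
    have hupdate : f (Function.update a j (a' j)) = f a := by
      by_cases hj : a j = a' j
      · rw [← hj, Function.update_eq_self]
      · exact hf a j _ (ha j hj).2
    rw [← hupdate]
    refine ih _ fun i hi => ?_
    rcases eq_or_ne i j with rfl | hij
    · simp at hi
    · rw [Function.update_of_ne hij] at hi
      exact ⟨(Finset.mem_insert.1 (ha i hi).1).resolve_left hij, (ha i hi).2⟩

namespace CausalModel

variable {S : Signature}

def RecursiveWrt (T : CausalModel S) (vlt : S.endo → S.endo → Prop) : Prop :=
  ∀ X Y : S.endo, vlt X Y →
    ∀ (u : S.Ctx) (a a' : ∀ Z : {Z : S.endo // Z ≠ X}, S.range Z.1),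
      (∀ Z : {Z : S.endo // Z ≠ X}, Z.1 ≠ Y → a Z = a' Z) → T.F X u a = T.F X u a'

variable {T : CausalModel S}

namespace RecursiveWrt

variable {vlt : S.endo → S.endo → Prop} [IsStrictTotalOrder S.endo vlt]

theorem F_eq (hrec : T.RecursiveWrt vlt) (u : S.Ctx) {X : S.endo}
    {a a' : ∀ Z : {Z : S.endo // Z ≠ X}, S.range Z.1}
    (h : ∀ Z : {Z : S.endo // Z ≠ X}, vlt Z.1 X → a Z = a' Z) : T.F X u a = T.F X u a' :=
  Function.apply_eq_of_forall_update_eq (p := fun Z => vlt X Z.1)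
    (fun _ Z _ hZ => hrec X Z.1 hZ u _ _ fun _ hZ' =>
      Function.update_of_ne (fun e => hZ' (congrArg Subtype.val e)) _ _)
    fun Z hZ => h Z <| ((trichotomous_of vlt X Z.1).resolve_left hZ).resolve_left
      fun e => Z.2 e.symm

theorem exists_isSolution (hrec : T.RecursiveWrt vlt) (g : S.Intervention) (u : S.Ctx) :
    ∃ a, T.isSolution g u a := by
  classical
  have wf := Finite.wellFounded_of_trans_of_irrefl vlt
  let a : S.Asgn := wf.fix fun X rec => (g X).getD <|
    T.F X u fun Y => if h : vlt Y.1 X then rec Y.1 h else Classical.arbitrary _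
  have ha : ∀ X, a X = (g X).getD
      (T.F X u fun Y => if vlt Y.1 X then a Y.1 else Classical.arbitrary _) :=
    fun X => wf.fix_eq _ X
  refine ⟨a, fun X => ⟨fun x hX => by rw [ha, hX, Option.getD_some], fun hX => ?_⟩⟩
  rw [ha, hX, Option.getD_none]
  exact hrec.F_eq u fun _ hZ => if_pos hZ

theorem isSolution_unique (hrec : T.RecursiveWrt vlt) {g : S.Intervention} {u : S.Ctx}
    {a b : S.Asgn} (ha : T.isSolution g u a) (hb : T.isSolution g u b) : a = b := by
  funext X
  induction X using (Finite.wellFounded_of_trans_of_irrefl vlt).induction with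
  | _ X ih =>
    cases hX : g X with
    | none =>
      rw [(ha X).2 hX, (hb X).2 hX]
      exact hrec.F_eq u fun Z hZ => ih Z hZ
    | some x => rw [(ha X).1 x hX, (hb X).1 x hX]

end RecursiveWrt

theorem Recursive.uniqueSolutions (hT : T.Recursive) : T.UniqueSolutions := by
  obtain ⟨vlt, _, hrec : T.RecursiveWrt vlt⟩ := hT
  intro g u
  obtain ⟨a, ha⟩ := hrec.exists_isSolution g u
  exact ⟨a, ha, fun b hb => hrec.isSolution_unique hb ha⟩

end CausalModel

variable {S : Signature}

def BForm.toLProp (g : S.Intervention) : BForm S → LProp S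
  | .atom X x => .basic g X x
  | .neg ψ => .neg (ψ.toLProp g)
  | .and ψ χ => .and (ψ.toLProp g) (χ.toLProp g)

def LEx.toLProp : LEx S → LProp S
  | .basic g ψ => ψ.toLProp g
  | .neg φ => .neg φ.toLProp
  | .and φ ψ => .and φ.toLProp ψ.toLProp

namespace CausalModel

variable {T : CausalModel S} {g : S.Intervention} {u : S.Ctx} {a : S.Asgn}

theorem satEx_basic_iff (ha : T.isSolution g u a) (huniq : ∀ b, T.isSolution g u b → b = a)
    (ψ : BForm S) : T.satEx u (.basic g ψ) ↔ ψ.holds a :=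
  ⟨fun h => h a ha, fun h b hb => huniq b hb ▸ h⟩

theorem sat_toLProp_iff (ha : T.isSolution g u a) (huniq : ∀ b, T.isSolution g u b → b = a) :
    ∀ ψ : BForm S, T.sat u (ψ.toLProp g) ↔ ψ.holds a
  | .atom X x => satEx_basic_iff ha huniq (.atom X x)
  | .neg ψ => not_congr (sat_toLProp_iff ha huniq ψ)
  | .and ψ χ => and_congr (sat_toLProp_iff ha huniq ψ) (sat_toLProp_iff ha huniq χ)

theorem UniqueSolutions.satEx_iff_sat_toLProp (hT : T.UniqueSolutions) (u : S.Ctx) :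
    ∀ φ : LEx S, T.satEx u φ ↔ T.sat u φ.toLProp
  | .basic g ψ =>
    let ⟨_, ha, huniq⟩ := hT g u
    (satEx_basic_iff ha huniq ψ).trans (sat_toLProp_iff ha huniq ψ).symm
  | .neg φ => not_congr (hT.satEx_iff_sat_toLProp u φ)
  | .and φ ψ => and_congr (hT.satEx_iff_sat_toLProp u φ) (hT.satEx_iff_sat_toLProp u ψ)

end CausalModel

/-- For every `φ ∈ Lex(S)` there is a `φ' ∈ Lprop(S)` such that
`φ ↔ φ'` is valid with respect to `Tun(S)` (and hence also with respect to
`Trec(S)`). -/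
theorem stmt16 (S : Signature) (φ : LEx S) :
    ∃ φ' : LProp S,
      (∀ T : CausalModel S, T.UniqueSolutions →
        ∀ u : S.Ctx, (T.satEx u φ ↔ T.sat u φ')) ∧
      (∀ T : CausalModel S, T.Recursive →
        ∀ u : S.Ctx, (T.satEx u φ ↔ T.sat u φ')) :=
  ⟨φ.toLProp, fun _ hT u => hT.satEx_iff_sat_toLProp u φ,
    fun _ hT u => hT.uniqueSolutions.satEx_iff_sat_toLProp u φ⟩
end
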